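/- The function r(s) = ∫₀^s (1+t²)^{−1/2} dt − ∫_s^∞ [(1+t²−mt^{2−n})^{−1/2} − (1+t²)^{−1/2}] dt satisfies the asymptotic expansion r(s) = arsinh(s) − (m/(2n)) s^{−n} + O(s^{−n−2}) as s → ∞. -/

import Mathlib

/-!
With `B = √(1 + t²)` and `A = √(1 + t² - x)`, the integrand is `1/A - 1/B = x / (A B (A + B))`,
and `A, B = t + O(1/t)` give `A B (A + B) = 2t³ + O(t)`. For `x = m t^{2-n}` this makes the integrand
`(m/2) t^{-n-1} + O(t^{-n-3})`. The leading term integrates over `(s, ∞)` to exactly `(m/(2n)) s^{-n}`,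
the error term to `O(s^{-n-2})`, and the first integral in `r(s)` is `arsinh s`.
-/

open MeasureTheory Filter

/-- The change-of-variables function `r(s)` for the AdS-Schwarzschild metric. -/
noncomputable def rCoord (m : ℝ) (n : ℕ) (s : ℝ) : ℝ :=
  (∫ t in (0 : ℝ)..s, 1 / Real.sqrt (1 + t ^ 2)) -
    ∫ t in Set.Ioi s,
      (1 / Real.sqrt (1 + t ^ 2 - m * t ^ ((2 : ℝ) - (n : ℝ))) - 1 / Real.sqrt (1 + t ^ 2))

open Set Real

lemma integral_one_div_sqrt_one_add_sq (s : ℝ) :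
    ∫ t in (0 : ℝ)..s, 1 / √(1 + t ^ 2) = arsinh s := by
  have hc : Continuous fun t : ℝ => (√(1 + t ^ 2))⁻¹ :=
    (by fun_prop : Continuous fun t : ℝ => √(1 + t ^ 2)).inv₀ fun t => by positivity
  simpa [one_div, arsinh_zero] using intervalIntegral.integral_eq_sub_of_hasDerivAt
    (fun t _ => hasDerivAt_arsinh t) (hc.intervalIntegrable 0 s)

lemma sqrt_one_add_sq_le {t : ℝ} (ht : 0 < t) : √(1 + t ^ 2) ≤ t + 1 / (2 * t) := by
  refine sqrt_le_iff.2 ⟨by positivity, ?_⟩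
  have h : (t + 1 / (2 * t)) ^ 2 = 1 + t ^ 2 + 1 / (4 * t ^ 2) := by field_simp; ring
  rw [h]
  have : 0 < 1 / (4 * t ^ 2) := by positivity
  linarith

lemma mul_mul_add_mem_Icc {t A B : ℝ} (ht : 1 ≤ t) (htA : t ≤ A) (hAB : A ≤ B)
    (hB : B ≤ t + 1 / (2 * t)) :
    A * B * (A + B) ∈ Icc (2 * t ^ 3) (2 * t ^ 3 + 5 * t) := by
  have ht0 : 0 < t := one_pos.trans_le ht
  set ε := 1 / (2 * t) with hε
  have htε : t * ε = 1 / 2 := by rw [hε]; field_simp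
  have hε0 : 0 < ε := by positivity
  have hε1 : ε ≤ 1 / 2 := by rw [hε, div_le_div_iff₀ (by positivity) two_pos]; linarith
  have hAB2 : t * t ≤ A * B := mul_le_mul htA (htA.trans hAB) ht0.le (ht0.le.trans htA)
  have hAB2' : A * B ≤ (t + ε) * (t + ε) :=
    mul_le_mul (hAB.trans hB) hB (ht0.le.trans (htA.trans hAB)) (by positivity)
  constructor
  · nlinarith
  · -- `2 (t + ε)³ = 2t³ + 3t + 3ε + 2ε³` since `tε = 1/2`
    nlinarith [mul_le_mul hAB2' (add_le_add (hAB.trans hB) hB) (by linarith) (by positivity)]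

lemma abs_one_div_sqrt_sub_sub_le {t x : ℝ} (ht : 1 ≤ t) (hx0 : 0 ≤ x) (hx1 : x ≤ 1) :
    |(1 / √(1 + t ^ 2 - x) - 1 / √(1 + t ^ 2)) - x / (2 * t ^ 3)| ≤ 5 * x / (4 * t ^ 5) := by
  have ht0 : 0 < t := one_pos.trans_le ht
  have hA2 : √(1 + t ^ 2 - x) ^ 2 = 1 + t ^ 2 - x := sq_sqrt (by nlinarith)
  have hB2 : √(1 + t ^ 2) ^ 2 = 1 + t ^ 2 := sq_sqrt (by positivity)
  have htA : t ≤ √(1 + t ^ 2 - x) := le_sqrt_of_sq_le (by linarith)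
  have hAB : √(1 + t ^ 2 - x) ≤ √(1 + t ^ 2) := sqrt_le_sqrt (by linarith)
  obtain ⟨hD, hD'⟩ := mul_mul_add_mem_Icc ht htA hAB (sqrt_one_add_sq_le ht0)
  generalize √(1 + t ^ 2 - x) = A at *
  generalize √(1 + t ^ 2) = B at *
  have hA0 : 0 < A := ht0.trans_le htA
  have hB0 : 0 < B := hA0.trans_le hAB
  have hdiff : 1 / A - 1 / B = x / (A * B * (A + B)) := by
    rw [div_sub_div _ _ hA0.ne' hB0.ne', div_eq_div_iff (by positivity) (by positivity)]
    linear_combination (A * B) * (hB2 - hA2)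
  rw [hdiff]
  generalize A * B * (A + B) = D at *
  have hD0 : 0 < D := by nlinarith [pow_pos ht0 3]
  have hsub : x / D - x / (2 * t ^ 3) = -(x * (D - 2 * t ^ 3) / (D * (2 * t ^ 3))) := by
    field_simp; ring
  rw [hsub, abs_neg, abs_of_nonneg (div_nonneg (mul_nonneg hx0 (by linarith)) (by positivity))]
  calc x * (D - 2 * t ^ 3) / (D * (2 * t ^ 3))
      ≤ x * (5 * t) / (2 * t ^ 3 * (2 * t ^ 3)) := by
        gcongr; all_goals linarith
    _ = 5 * x / (4 * t ^ 5) := by field_simp; ring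

lemma mul_rpow_two_sub_le_one {m t a : ℝ} (ha : 3 ≤ a) (ht : 1 ≤ t) (hmt : m ≤ t) :
    m * t ^ (2 - a) ≤ 1 := by
  have ht0 : 0 < t := one_pos.trans_le ht
  calc m * t ^ (2 - a) ≤ t * t ^ (-1 : ℝ) :=
        mul_le_mul hmt (rpow_le_rpow_of_exponent_le ht (by linarith)) (by positivity) ht0.le
    _ = 1 := by rw [rpow_neg_one, mul_inv_cancel₀ ht0.ne']

lemma abs_rCoord_integrand_sub_le {m t a : ℝ} (hm : 0 ≤ m) (ha : 3 ≤ a) (ht : max 1 m ≤ t) :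
    |(1 / √(1 + t ^ 2 - m * t ^ (2 - a)) - 1 / √(1 + t ^ 2)) - m / 2 * t ^ (-a - 1)|
      ≤ 5 * m / 4 * t ^ (-a - 3) := by
  have ht1 : 1 ≤ t := (le_max_left _ _).trans ht
  have ht0 : 0 < t := one_pos.trans_le ht1
  have hpow (k : ℕ) : t ^ (2 - a - k) = t ^ (2 - a) / t ^ k := by
    rw [rpow_sub ht0, rpow_natCast]
  have e1 : m / 2 * t ^ (-a - 1) = m * t ^ (2 - a) / (2 * t ^ 3) := by
    rw [show -a - 1 = 2 - a - (3 : ℕ) by push_cast; ring, hpow]; ring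
  have e2 : 5 * m / 4 * t ^ (-a - 3) = 5 * (m * t ^ (2 - a)) / (4 * t ^ 5) := by
    rw [show -a - 3 = 2 - a - (5 : ℕ) by push_cast; ring, hpow]; ring
  rw [e1, e2]
  exact abs_one_div_sqrt_sub_sub_le ht1 (by positivity) (mul_rpow_two_sub_le_one ha ht1 ((le_max_right _ _).trans ht))

section IoiBounds

variable {E : Type*} [NormedAddCommGroup E] {f : ℝ → E} {s q C : ℝ}

lemma integrableOn_Ioi_of_norm_le_rpow (hs : 0 < s) (hq : q < -1)
    (hmeas : AEStronglyMeasurable f (volume.restrict (Ioi s)))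
    (hf : ∀ t ∈ Ioi s, ‖f t‖ ≤ C * t ^ q) : IntegrableOn f (Ioi s) :=
  ((integrableOn_Ioi_rpow_of_lt hq hs).const_mul C).mono' hmeas
    ((ae_restrict_iff' measurableSet_Ioi).2 (ae_of_all _ hf))

lemma norm_integral_Ioi_le_of_norm_le_rpow [NormedSpace ℝ E] (hs : 0 < s) (hq : q < -1)
    (hf : ∀ t ∈ Ioi s, ‖f t‖ ≤ C * t ^ q) :
    ‖∫ t in Ioi s, f t‖ ≤ C * (-s ^ (q + 1) / (q + 1)) := by
  rw [← integral_Ioi_rpow_of_lt hq hs, ← integral_const_mul]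
  exact norm_integral_le_of_norm_le ((integrableOn_Ioi_rpow_of_lt hq hs).const_mul C)
    ((ae_restrict_iff' measurableSet_Ioi).2 (ae_of_all _ hf))

end IoiBounds

lemma rCoord_sub_eq_neg_integral {m : ℝ} {n : ℕ} (hm : 0 ≤ m) (hn : 3 ≤ n) {s : ℝ}
    (hs : max 1 m ≤ s) :
    rCoord m n s - (arsinh s - m / (2 * n) * s ^ (-(n : ℝ))) =
      -∫ t in Ioi s, ((1 / √(1 + t ^ 2 - m * t ^ ((2 : ℝ) - n)) - 1 / √(1 + t ^ 2))
        - m / 2 * t ^ (-(n : ℝ) - 1)) := by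
  have ha : (3 : ℝ) ≤ n := by exact_mod_cast hn
  have hs0 : 0 < s := one_pos.trans_le ((le_max_left _ _).trans hs)
  have hg : IntegrableOn (fun t : ℝ => m / 2 * t ^ (-(n : ℝ) - 1)) (Ioi s) :=
    (integrableOn_Ioi_rpow_of_lt (by linarith) hs0).const_mul _
  have hφ : IntegrableOn (fun t : ℝ => (1 / √(1 + t ^ 2 - m * t ^ ((2 : ℝ) - n))
      - 1 / √(1 + t ^ 2)) - m / 2 * t ^ (-(n : ℝ) - 1)) (Ioi s) :=
    integrableOn_Ioi_of_norm_le_rpow (q := -(n : ℝ) - 3) hs0 (by linarith)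
      (Measurable.aestronglyMeasurable (by fun_prop))
      fun t ht => abs_rCoord_integrand_sub_le hm ha (hs.trans ht.le)
  have hf := hφ.add hg
  simp only [Pi.add_def, sub_add_cancel] at hf
  rw [integral_sub hf hg, integral_const_mul, integral_Ioi_rpow_of_lt (by linarith) hs0,
    rCoord, integral_one_div_sqrt_one_add_sq, show -(n : ℝ) - 1 + 1 = -n by ring]
  field_simp
  ring

/-- As `s → ∞`, `r(s) = arsinh(s) − (m/(2n)) s^{−n} + O(s^{−n−2})`. -/
theorem rCoord_asymptotics (n : ℕ) (hn : 3 ≤ n) (m : ℝ) (hm : 0 < m) :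
    (fun s : ℝ => rCoord m n s - (Real.arsinh s - m / (2 * n) * s ^ (-(n : ℝ))))
      =O[atTop] fun s : ℝ => s ^ (-(n : ℝ) - 2) := by
  have ha : (3 : ℝ) ≤ n := by exact_mod_cast hn
  refine Asymptotics.IsBigO.of_bound (5 * m / 4 / (n + 2)) ?_
  filter_upwards [eventually_ge_atTop (max 1 m)] with s hs
  have hs0 : 0 < s := one_pos.trans_le ((le_max_left _ _).trans hs)
  rw [rCoord_sub_eq_neg_integral hm.le hn hs, norm_neg,
    norm_of_nonneg (rpow_pos_of_pos hs0 _).le]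
  calc _ ≤ 5 * m / 4 * (-s ^ (-(n : ℝ) - 3 + 1) / (-(n : ℝ) - 3 + 1)) :=
        norm_integral_Ioi_le_of_norm_le_rpow hs0 (by linarith)
          fun t ht => abs_rCoord_integrand_sub_le hm.le ha (hs.trans ht.le)
    _ = 5 * m / 4 / (n + 2) * s ^ (-(n : ℝ) - 2) := by
        rw [show -(n : ℝ) - 3 + 1 = -(n + 2) by ring, show -(n : ℝ) - 2 = -(n + 2) by ring,
          neg_div_neg_eq]
        ring
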